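/- Under the hypotheses of the previous deterministic setting (f L_f-smooth and bounded below by f*, ∇φ = Id − Q with φ being L_φ-smooth, λ ≥ 0, L = L_f + λL_φ, step size α = min(1/L, 1/√T)), the averaged squared Pareto-gradient satisfies (1/T)Σ_{t=0}^{T−1}‖∇f(x_t) + λ(x_t − Q(x_t))‖² ≤ (2/√T)·(f(x₀) − f* + λ·M·‖x₀ − x_T‖)·max(1, L/√T), where M = max_{x∈[x₀,x_T]} ‖x − Q(x)‖. -/

import Mathlib

/-!
Gradient descent with step `α` on `F = f + λφ` is exactly the given iteration, since
`∇F = ∇f + λ(Id - Q)`, and `∇F` is `L`-Lipschitz. As `αL ≤ 1`, the descent lemma makes each step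
decrease `F` by at least `α/2 ‖∇F(x_t)‖²`; telescoping bounds `α/2 · Σ ‖∇F(x_t)‖²` by
`F(x₀) - F(x_T) = f(x₀) - f(x_T) + λ(φ(x₀) - φ(x_T))`. The first difference is at most
`f(x₀) - f*`, and by the mean value inequality on `[x₀, x_T]` the second is at most
`M ‖x₀ - x_T‖`. Finally `1/α = max(L, √T)`.
-/

open InnerProductSpace Finset

lemma norm_add_smul_sub_add_smul_le {E F : Type*} [SeminormedAddCommGroup E]
    [SeminormedAddCommGroup F] [NormedSpace ℝ F]
    {G H : E → F} {a b c : ℝ} (hG : ∀ x y, ‖G x - G y‖ ≤ a * ‖x - y‖)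
    (hH : ∀ x y, ‖H x - H y‖ ≤ b * ‖x - y‖) (hc : 0 ≤ c) (x y : E) :
    ‖(G x + c • H x) - (G y + c • H y)‖ ≤ (a + c * b) * ‖x - y‖ :=
  calc ‖(G x + c • H x) - (G y + c • H y)‖
      = ‖(G x - G y) + c • (H x - H y)‖ := by rw [smul_sub, add_sub_add_comm]
    _ ≤ ‖G x - G y‖ + c * ‖H x - H y‖ := by
        grw [norm_add_le, norm_smul, Real.norm_of_nonneg hc]
    _ ≤ a * ‖x - y‖ + c * (b * ‖x - y‖) := by gcongr <;> apply_assumption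
    _ = (a + c * b) * ‖x - y‖ := by ring

section Gradient

variable {E : Type*} [NormedAddCommGroup E] [InnerProductSpace ℝ E] [CompleteSpace E]

lemma gradient_add_const_mul {f g : E → ℝ} {x : E} (hf : DifferentiableAt ℝ f x)
    (hg : DifferentiableAt ℝ g x) (c : ℝ) :
    gradient (fun y => f y + c * g y) x = gradient f x + c • gradient g x := by
  have hsum : HasFDerivAt (fun y => f y + c * g y) (fderiv ℝ f x + c • fderiv ℝ g x) x :=
    hf.hasFDerivAt.add (hg.hasFDerivAt.const_mul c)
  rw [(hasFDerivAt_iff_hasGradientAt.1 hsum).gradient, map_add, map_smulₛₗ]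
  rfl

lemma hasDerivAt_comp_add_smul {f : E → ℝ} {x v : E} {t : ℝ}
    (hf : DifferentiableAt ℝ f (x + t • v)) :
    HasDerivAt (fun s : ℝ => f (x + s • v)) (inner ℝ (gradient f (x + t • v)) v) t := by
  have hline : HasDerivAt (fun s : ℝ => x + s • v) v t := by
    simpa using ((hasDerivAt_id t).smul_const v).const_add x
  rw [inner_gradient_left]
  exact hf.hasFDerivAt.comp_hasDerivAt t hline

lemma le_add_inner_gradient_add_sq {f : E → ℝ} {L : ℝ} (hf : Differentiable ℝ f)
    (hL : ∀ x y, ‖gradient f x - gradient f y‖ ≤ L * ‖x - y‖) (x y : E) :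
    f y ≤ f x + inner ℝ (gradient f x) (y - x) + L / 2 * ‖y - x‖ ^ 2 := by
  set v := y - x
  set h : ℝ → ℝ := fun t =>
    f (x + t • v) - inner ℝ (gradient f x) v * t - L * ‖v‖ ^ 2 / 2 * t ^ 2
  have hderiv : ∀ t, HasDerivAt h (inner ℝ (gradient f (x + t • v)) v
      - inner ℝ (gradient f x) v - L * ‖v‖ ^ 2 * t) t := fun t => by
    have hpow := (hasDerivAt_pow 2 t).const_mul (L * ‖v‖ ^ 2 / 2)
    exact (((hasDerivAt_comp_add_smul (hf _)).sub ((hasDerivAt_id t).const_mul _)).sub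
      hpow).congr_deriv (by simp only [inner_gradient_left, mul_one]; ring)
  have hanti : AntitoneOn h (Set.Icc 0 1) := by
    refine antitoneOn_of_hasDerivWithinAt_nonpos (convex_Icc 0 1)
      (fun t _ => (hderiv t).continuousAt.continuousWithinAt)
      (fun t _ => (hderiv t).hasDerivWithinAt) fun t ht => ?_
    rw [interior_Icc] at ht
    have hgrowth : inner ℝ (gradient f (x + t • v) - gradient f x) v ≤ L * ‖v‖ ^ 2 * t :=
      calc inner ℝ (gradient f (x + t • v) - gradient f x) v
          ≤ ‖gradient f (x + t • v) - gradient f x‖ * ‖v‖ := real_inner_le_norm _ _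
        _ ≤ L * ‖(x + t • v) - x‖ * ‖v‖ := by gcongr; exact hL _ _
        _ = L * ‖v‖ ^ 2 * t := by
            rw [add_sub_cancel_left, norm_smul, Real.norm_of_nonneg ht.1.le]; ring
    rw [inner_sub_left] at hgrowth
    linarith
  have h01 := hanti (Set.left_mem_Icc.2 zero_le_one) (Set.right_mem_Icc.2 zero_le_one)
    zero_le_one
  simp only [h, v, zero_smul, add_zero, one_smul, add_sub_cancel] at h01
  linarith

lemma half_mul_sq_norm_gradient_le_sub {f : E → ℝ} {L α : ℝ} (hf : Differentiable ℝ f)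
    (hL : ∀ x y, ‖gradient f x - gradient f y‖ ≤ L * ‖x - y‖) (hα : 0 < α) (hαL : α * L ≤ 1)
    (x : E) : α / 2 * ‖gradient f x‖ ^ 2 ≤ f x - f (x - α • gradient f x) := by
  have h := le_add_inner_gradient_add_sq hf hL x (x - α • gradient f x)
  rw [sub_sub_cancel_left, inner_neg_right, real_inner_smul_right,
    real_inner_self_eq_norm_sq, norm_neg, norm_smul, Real.norm_of_nonneg hα.le] at h
  nlinarith [sq_nonneg ‖gradient f x‖]

lemma half_mul_sum_sq_norm_gradient_le_sub {f : E → ℝ} {L α : ℝ} (hf : Differentiable ℝ f)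
    (hL : ∀ x y, ‖gradient f x - gradient f y‖ ≤ L * ‖x - y‖) (hα : 0 < α) (hαL : α * L ≤ 1)
    {x : ℕ → E} (hx : ∀ t, x (t + 1) = x t - α • gradient f (x t)) (T : ℕ) :
    α / 2 * ∑ t ∈ range T, ‖gradient f (x t)‖ ^ 2 ≤ f (x 0) - f (x T) :=
  calc α / 2 * ∑ t ∈ range T, ‖gradient f (x t)‖ ^ 2
      = ∑ t ∈ range T, α / 2 * ‖gradient f (x t)‖ ^ 2 := mul_sum _ _ _
    _ ≤ ∑ t ∈ range T, (f (x t) - f (x (t + 1))) := sum_le_sum fun t _ => by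
        rw [hx]; exact half_mul_sq_norm_gradient_le_sub hf hL hα hαL (x t)
    _ = f (x 0) - f (x T) := sum_range_sub' (fun t => f (x t)) T

lemma sub_le_mul_norm_of_norm_gradient_le {f : E → ℝ} {a b : E} {M : ℝ}
    (hf : ∀ z ∈ segment ℝ a b, DifferentiableAt ℝ f z)
    (hM : ∀ z ∈ segment ℝ a b, ‖gradient f z‖ ≤ M) : f a - f b ≤ M * ‖a - b‖ := by
  have hmv := (convex_segment a b).norm_image_sub_le_of_norm_hasFDerivWithin_le
    (fun z hz => (hf z hz).hasGradientAt.hasFDerivAt.hasFDerivWithinAt)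
    (fun z hz => by rw [LinearIsometryEquiv.norm_map]; exact hM z hz)
    (right_mem_segment ℝ a b) (left_mem_segment ℝ a b)
  exact (le_abs_self _).trans hmv

end Gradient

lemma one_div_min_one_div {a b : ℝ} (ha : 0 < a) (hb : 0 < b) :
    min (1 / a) (1 / b) = 1 / max a b := by
  rcases le_total a b with h | h
  · rw [min_eq_right (one_div_le_one_div_of_le ha h), max_eq_right h]
  · rw [min_eq_left (one_div_le_one_div_of_le hb h), max_eq_left h]

lemma average_le_of_min_step_mul_le {L S Δ : ℝ} {T : ℕ} (hT : 1 ≤ T) (hL : 0 < L)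
    (h : min (1 / L) (1 / Real.sqrt T) / 2 * S ≤ Δ) :
    1 / (T : ℝ) * S ≤ 2 / Real.sqrt T * Δ * max 1 (L / Real.sqrt T) := by
  have hs : 0 < Real.sqrt T := Real.sqrt_pos.2 (by exact_mod_cast hT)
  rw [one_div_min_one_div hL hs] at h
  have hS : S ≤ 2 * max L (Real.sqrt T) * Δ := by
    rw [div_div, one_div_mul_eq_div, div_le_iff₀ (by positivity)] at h; linarith
  calc 1 / (T : ℝ) * S ≤ 1 / (T : ℝ) * (2 * max L (Real.sqrt T) * Δ) := by gcongr
    _ = 2 / Real.sqrt T * Δ * max 1 (L / Real.sqrt T) := by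
        rw [← div_self hs.ne', max_div_div_right hs.le, max_comm]
        field_simp
        rw [Real.sq_sqrt (Nat.cast_nonneg T)]

theorem stmt_8 {d : ℕ} (f φ : EuclideanSpace ℝ (Fin d) → ℝ)
    (Q : EuclideanSpace ℝ (Fin d) → EuclideanSpace ℝ (Fin d))
    (Lf Lφ lam L : ℝ) (fstar : ℝ) (T : ℕ) (hT : 1 ≤ T)
    (hfd : Differentiable ℝ f) (hφd : Differentiable ℝ φ)
    (hLf : ∀ x y, ‖gradient f x - gradient f y‖ ≤ Lf * ‖x - y‖)
    (hLφ : ∀ x y, ‖gradient φ x - gradient φ y‖ ≤ Lφ * ‖x - y‖)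
    (hfbdd : ∀ x, fstar ≤ f x)
    (hgradφ : ∀ x, gradient φ x = x - Q x)
    (hlam : 0 ≤ lam) (hLdef : L = Lf + lam * Lφ) (hL : 0 < L)
    (α : ℝ) (hα : α = min (1 / L) (1 / Real.sqrt T))
    (x : ℕ → EuclideanSpace ℝ (Fin d))
    (hx : ∀ t, x (t + 1) = x t - α • (gradient f (x t) + lam • (x t - Q (x t))))
    (M : ℝ)
    (hM : IsGreatest ((fun z => ‖z - Q z‖) '' segment ℝ (x 0) (x T)) M) :
    (1 / (T : ℝ)) * ∑ t ∈ Finset.range T, ‖gradient f (x t) + lam • (x t - Q (x t))‖^2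
      ≤ (2 / Real.sqrt T) * (f (x 0) - fstar + lam * M * ‖x 0 - x T‖)
          * max 1 (L / Real.sqrt T) := by
  set F := fun z => f z + lam * φ z
  have hgradF : ∀ z, gradient F z = gradient f z + lam • (z - Q z) := fun z => by
    rw [gradient_add_const_mul (hfd z) (hφd z), hgradφ]
  have hLF : ∀ p q, ‖gradient F p - gradient F q‖ ≤ L * ‖p - q‖ := by
    simpa only [hgradF, hLdef, ← hgradφ] using norm_add_smul_sub_add_smul_le hLf hLφ hlam
  have hα0 : 0 < α := hα ▸ lt_min (by positivity) (by positivity)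
  have hαL : α * L ≤ 1 := by
    rw [← le_div_iff₀ hL, hα]; exact min_le_left _ _
  have hFd : Differentiable ℝ F := hfd.add (hφd.const_mul lam)
  have hdescent := half_mul_sum_sq_norm_gradient_le_sub hFd hLF hα0 hαL
    (by simpa only [hgradF] using hx) T
  have hφ : φ (x 0) - φ (x T) ≤ M * ‖x 0 - x T‖ :=
    sub_le_mul_norm_of_norm_gradient_le (fun z _ => hφd z)
      (fun z hz => hgradφ z ▸ hM.2 ⟨z, hz, rfl⟩)
  refine average_le_of_min_step_mul_le hT hL (hα ▸ ?_)
  simp only [hgradF, F] at hdescent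
  linarith [hfbdd (x T), mul_le_mul_of_nonneg_left hφ hlam]
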